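/- arXiv:1809.02757 — 2 statements merged into one kernel-verified Lean document; each statement's English description precedes it below -/
import Mathlib

section
/- Let σ ∈ ℝ with σ ≥ 0 and let z ∈ ℝ with z > 1. Then ∫₀^π (sin t)^{2σ+1} / (z + cos t)^{σ+1} dt ≤ 2^{σ} · ln( (z+1)/(z−1) ). -/
open Real intervalIntegral

/-!
Since `sin² t = (1 - cos t)(1 + cos t) ≤ 2 (z + cos t)`, the integrand is at most
`2^σ sin t / (z + cos t)`, whose integral over `[0, π]` is `log ((z + 1) / (z - 1))`, the
variation of `-log (z + cos t)`.
-/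

lemma integral_sin_div_add_cos {z : ℝ} (hz : 1 < z) :
    ∫ t in (0 : ℝ)..π, sin t / (z + cos t) = log ((z + 1) / (z - 1)) := by
  have hne : ∀ t, z + cos t ≠ 0 := fun t => by linarith [neg_one_le_cos t]
  have hderiv : ∀ t ∈ Set.uIcc 0 π,
      HasDerivAt (fun t => -log (z + cos t)) (sin t / (z + cos t)) t := fun t _ => by
    simpa [neg_div] using (((hasDerivAt_cos t).const_add z).log (hne t)).fun_neg
  have hint : IntervalIntegrable (fun t => sin t / (z + cos t)) MeasureTheory.volume 0 π :=
    (continuous_sin.div (continuous_const.add continuous_cos) hne).intervalIntegrable _ _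
  rw [integral_eq_sub_of_hasDerivAt hderiv hint, cos_pi, cos_zero,
    ← sub_eq_add_neg, log_div (by linarith) (by linarith)]
  ring

lemma sin_sq_le_two_mul_add_cos {z : ℝ} (hz : 1 ≤ z) (t : ℝ) :
    sin t ^ 2 ≤ 2 * (z + cos t) := by
  nlinarith [sin_sq_add_cos_sq t, neg_one_le_cos t, cos_le_one t]

lemma rpow_two_mul_add_one_div_rpow_add_one_le {s w σ : ℝ} (hs : 0 ≤ s) (hw : 0 < w)
    (hσ : 0 ≤ σ) (hsw : s ^ 2 ≤ 2 * w) :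
    s ^ (2 * σ + 1) / w ^ (σ + 1) ≤ 2 ^ σ * (s / w) := by
  have hnum : s ^ (2 * σ + 1) = (s ^ 2) ^ σ * s := by
    rw [rpow_add' hs (by linarith), rpow_one, ← rpow_natCast s 2, ← rpow_mul hs,
      Nat.cast_ofNat]
  have hden : w ^ (σ + 1) = w ^ σ * w := by rw [rpow_add hw, rpow_one]
  have hwσ : 0 < w ^ σ := rpow_pos_of_pos hw σ
  calc s ^ (2 * σ + 1) / w ^ (σ + 1) = (s ^ 2) ^ σ / w ^ σ * (s / w) := by
        rw [hnum, hden]; field_simp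
    _ ≤ 2 ^ σ * (s / w) := by
        gcongr
        rw [div_le_iff₀ hwσ, ← mul_rpow zero_le_two hw.le]
        exact rpow_le_rpow (sq_nonneg s) hsw hσ

/-- For real `σ ≥ 0` and `z > 1`:
`∫₀^π sin(t)^{2σ+1} / (z + cos t)^{σ+1} dt ≤ 2^σ ln((z+1)/(z−1))`. -/
theorem sin_pow_div_cos_integral_bound_two (σ : ℝ) (hσ : 0 ≤ σ) (z : ℝ) (hz : 1 < z) :
    ∫ t in (0 : ℝ)..Real.pi, Real.sin t ^ (2 * σ + 1) / (z + Real.cos t) ^ (σ + 1) ≤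
      2 ^ σ * Real.log ((z + 1) / (z - 1)) := by
  have hpos : ∀ t, 0 < z + cos t := fun t => by linarith [neg_one_le_cos t]
  have hcont : Continuous fun t => z + cos t := continuous_const.add continuous_cos
  rw [← integral_sin_div_add_cos hz, ← integral_const_mul]
  refine integral_mono_on pi_pos.le ?_ ?_ fun t ht => ?_
  · refine ContinuousOn.intervalIntegrable (ContinuousOn.div ?_ ?_ fun t _ => ?_)
    · exact continuous_sin.continuousOn.rpow_const fun _ _ => Or.inr (by linarith)
    · exact hcont.continuousOn.rpow_const fun t _ => Or.inl (hpos t).ne'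
    · exact (rpow_pos_of_pos (hpos t) _).ne'
  · exact (continuous_const.mul (continuous_sin.div hcont fun t => (hpos t).ne')
      ).intervalIntegrable _ _
  · exact rpow_two_mul_add_one_div_rpow_add_one_le (sin_nonneg_of_nonneg_of_le_pi ht.1 ht.2)
      (hpos t) hσ (sin_sq_le_two_mul_add_cos hz.le t)
end

section
/- Let ν ≥ 0, μ ≥ 0 be real and let a > 0 be real. Then ∫₀^a cosh( (ν + 1/2)·x ) · ( cosh(a) − cosh(x) )^{μ − 1/2} dx ≤ 2√2 · e^{(ν + 1/2)·a} · ( cosh(a) − 1 )^{μ}. -/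
open Real MeasureTheory
open Set

/-!
On `(0, a)` the integrand is dominated by `e^{(ν+1/2)a} (cosh a - 1)^μ (a (a - x) / 2)^{-1/2}`:
bound `cosh((ν+1/2)x)` by `e^{(ν+1/2)a}`, the factor `(cosh a - cosh x)^μ` by `(cosh a - 1)^μ`,
and use `cosh a - cosh x ≥ (a² - x²)/2 ≥ a (a - x)/2`, which holds because `cosh t - t²/2`
is increasing on `[0, ∞)`. The dominating function is integrable at `x = a`, and its integral
over `(0, a)` is exactly `2√2 e^{(ν+1/2)a} (cosh a - 1)^μ`.
-/

lemma integrableOn_Ioo_sub_rpow {s : ℝ} (hs : -1 < s) (a b : ℝ) :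
    IntegrableOn (fun x => (a - x) ^ s) (Ioo b a) :=
  have : IntervalIntegrable (fun x => (a - x) ^ s) volume b a := by
    simpa using
      ((intervalIntegral.intervalIntegrable_rpow' hs (a := 0) (b := a - b)).comp_sub_left a).symm
  this.1.mono_set Ioo_subset_Ioc_self

lemma integral_Ioo_sub_rpow {s : ℝ} (hs : -1 < s) {a b : ℝ} (hba : b ≤ a) :
    ∫ x in Ioo b a, (a - x) ^ s = (a - b) ^ (s + 1) / (s + 1) := by
  rw [← integral_Ioc_eq_integral_Ioo, ← intervalIntegral.integral_of_le hba,
    intervalIntegral.integral_comp_sub_left (fun x => x ^ s), integral_rpow (Or.inl hs), sub_self,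
    zero_rpow (by linarith), sub_zero]

namespace Real

lemma monotoneOn_cosh_sub_sq_div_two : MonotoneOn (fun t => cosh t - t ^ 2 / 2) (Ici 0) := by
  refine monotoneOn_of_deriv_nonneg (convex_Ici 0) (by fun_prop) (by fun_prop) fun t ht => ?_
  rw [interior_Ici] at ht
  have hderiv : HasDerivAt (fun t => cosh t - t ^ 2 / 2) (sinh t - 2 * t ^ 1 / 2) t :=
    (hasDerivAt_cosh t).sub ((hasDerivAt_pow 2 t).div_const 2)
  rw [hderiv.deriv]
  linarith [self_le_sinh_iff.2 (le_of_lt ht)]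

lemma mul_sub_div_two_le_cosh_sub_cosh {a x : ℝ} (hx : 0 ≤ x) (hxa : x ≤ a) :
    a * (a - x) / 2 ≤ cosh a - cosh x := by
  have hsq : (a ^ 2 - x ^ 2) / 2 ≤ cosh a - cosh x := by
    have := monotoneOn_cosh_sub_sq_div_two hx (hx.trans hxa : 0 ≤ a) hxa
    simp only at this
    linarith
  nlinarith [mul_nonneg hx (sub_nonneg.2 hxa)]

lemma cosh_mul_le_exp_mul {c x a : ℝ} (hc : 0 ≤ c) (hx : |x| ≤ a) :
    cosh (c * x) ≤ exp (c * a) := by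
  calc cosh (c * x) ≤ cosh (c * a) := by
        rw [cosh_le_cosh, abs_mul, abs_mul, abs_of_nonneg hc,
          abs_of_nonneg ((abs_nonneg x).trans hx)]
        exact mul_le_mul_of_nonneg_left hx hc
    _ ≤ exp (c * a) := by
        rw [cosh_eq]
        linarith [exp_le_exp.2 (show -(c * a) ≤ c * a by nlinarith [abs_nonneg x])]

lemma cosh_sub_cosh_rpow_le {μ s a x : ℝ} (hμ : 0 ≤ μ) (hs : s ≤ 0) (hx : x ∈ Ioo 0 a) :
    (cosh a - cosh x) ^ (μ + s) ≤ (cosh a - 1) ^ μ * ((a / 2) ^ s * (a - x) ^ s) := by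
  have hpos : 0 < cosh a - cosh x :=
    sub_pos.2 (cosh_strictMonoOn hx.1.le (hx.1.trans hx.2).le hx.2)
  rw [rpow_add hpos, ← mul_rpow (by linarith [hx.1, hx.2]) (by linarith [hx.2])]
  refine mul_le_mul (rpow_le_rpow hpos.le ?_ hμ) (rpow_le_rpow_of_nonpos ?_ ?_ hs)
    (rpow_nonneg hpos.le _) (rpow_nonneg (by linarith [one_le_cosh a]) _)
  · linarith [one_le_cosh x]
  · exact mul_pos (by linarith [hx.1, hx.2]) (sub_pos.2 hx.2)
  · rw [div_mul_eq_mul_div]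
    exact mul_sub_div_two_le_cosh_sub_cosh hx.1.le hx.2.le

end Real

/-- For real `ν ≥ 0`, `μ ≥ 0` and `a > 0`:
`∫₀^a cosh((ν+1/2)x) (cosh a − cosh x)^{μ−1/2} dx ≤ 2√2 e^{(ν+1/2)a} (cosh a − 1)^μ`,
the improper integral being convergent. -/
theorem integral_cosh_mul_cosh_sub_cosh_pow_le (ν μ : ℝ) (hν : 0 ≤ ν) (hμ : 0 ≤ μ)
    (a : ℝ) (ha : 0 < a) :
    IntegrableOn
        (fun x : ℝ => Real.cosh ((ν + 1 / 2) * x) * (Real.cosh a - Real.cosh x) ^ (μ - 1 / 2))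
        (Set.Ioo 0 a) ∧
      ∫ x in Set.Ioo (0 : ℝ) a,
          Real.cosh ((ν + 1 / 2) * x) * (Real.cosh a - Real.cosh x) ^ (μ - 1 / 2) ≤
        2 * Real.sqrt 2 * Real.exp ((ν + 1 / 2) * a) * (Real.cosh a - 1) ^ μ := by
  have hcosh : ∀ x ∈ Ioo 0 a, 0 ≤ cosh a - cosh x := fun x hx =>
    sub_nonneg.2 <| cosh_strictMonoOn.monotoneOn hx.1.le (hx.1.trans hx.2).le hx.2.le
  have hbound : ∀ x ∈ Ioo 0 a,
      cosh ((ν + 1 / 2) * x) * (cosh a - cosh x) ^ (μ - 1 / 2) ≤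
        exp ((ν + 1 / 2) * a) * ((cosh a - 1) ^ μ *
          ((a / 2) ^ (-(1 / 2) : ℝ) * (a - x) ^ (-(1 / 2) : ℝ))) := fun x hx => by
    rw [sub_eq_add_neg μ]
    exact mul_le_mul (cosh_mul_le_exp_mul (by linarith) (by rw [abs_of_pos hx.1]; exact hx.2.le))
      (cosh_sub_cosh_rpow_le hμ (by norm_num) hx) (rpow_nonneg (hcosh x hx) _) (exp_pos _).le
  have hmajorant := (((integrableOn_Ioo_sub_rpow (s := -(1 / 2)) (by norm_num) a 0).const_mul
    ((a / 2) ^ (-(1 / 2) : ℝ))).const_mul ((cosh a - 1) ^ μ)).const_mul (exp ((ν + 1 / 2) * a))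
  have hintegrable : IntegrableOn
      (fun x => cosh ((ν + 1 / 2) * x) * (cosh a - cosh x) ^ (μ - 1 / 2)) (Ioo 0 a) := by
    refine hmajorant.mono' (by fun_prop) ((ae_restrict_mem measurableSet_Ioo).mono fun x hx => ?_)
    rw [norm_of_nonneg (mul_nonneg (cosh_pos _).le (rpow_nonneg (hcosh x hx) _))]
    exact hbound x hx
  refine ⟨hintegrable,
    (setIntegral_mono_on hintegrable hmajorant measurableSet_Ioo hbound).trans_eq ?_⟩
  have hconst : (a / 2) ^ (-(1 / 2) : ℝ) * ((a - 0) ^ (-(1 / 2) + 1 : ℝ) / (-(1 / 2) + 1)) =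
      2 * √2 := by
    rw [sub_zero, show (-(1 / 2) + 1 : ℝ) = 1 / 2 by norm_num, rpow_neg (by positivity),
      ← sqrt_eq_rpow, ← sqrt_eq_rpow, sqrt_div' _ zero_le_two]
    field_simp
  rw [integral_const_mul, integral_const_mul, integral_const_mul,
    integral_Ioo_sub_rpow (by norm_num) ha.le, hconst]
  ring
end
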